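/- Bilinear estimate for ψh against a uniformly bounded grid function: let c₀ ≥ 0 and let U, a, e be periodic grid functions on the M₁×M₂ periodic grid with step size h > 0 such that |U(p,q)| ≤ c₀ and |(δ̂h U)(p,q)| ≤ c₀ for all grid points (p,q). Then |⟨ψh(a, U), e⟩| ≤ (c₀/3)·‖a‖·‖e‖ + (√2·c₀/3)·‖a‖·|e|₁. -/

import Mathlib

open Real Finset Asymptotics

/-- A periodic grid function on the `M₁ × M₂` periodic grid. -/
abbrev GridFun (M₁ M₂ : ℕ) : Type := ZMod M₁ × ZMod M₂ → ℝ

variable {M₁ M₂ : ℕ}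

/-- Discrete inner product `⟨u,v⟩ = h² Σ_a Σ_b u(a,b) v(a,b)`. -/
noncomputable def gip [NeZero M₁] [NeZero M₂] (h : ℝ) (u v : GridFun M₁ M₂) : ℝ :=
  h ^ 2 * ∑ a : ZMod M₁, ∑ b : ZMod M₂, u (a, b) * v (a, b)

/-- Discrete L² norm. -/
noncomputable def gnorm [NeZero M₁] [NeZero M₂] (h : ℝ) (v : GridFun M₁ M₂) : ℝ :=
  Real.sqrt (gip h v v)

/-- Forward difference in `x`. -/
noncomputable def dx (h : ℝ) (v : GridFun M₁ M₂) : GridFun M₁ M₂ :=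
  fun p => (v (p.1 + 1, p.2) - v p) / h

/-- Forward difference in `y`. -/
noncomputable def dy (h : ℝ) (v : GridFun M₁ M₂) : GridFun M₁ M₂ :=
  fun p => (v (p.1, p.2 + 1) - v p) / h

/-- Central difference in `x`. -/
noncomputable def dhx (h : ℝ) (v : GridFun M₁ M₂) : GridFun M₁ M₂ :=
  fun p => (v (p.1 + 1, p.2) - v (p.1 - 1, p.2)) / (2 * h)

/-- Central difference in `y`. -/
noncomputable def dhy (h : ℝ) (v : GridFun M₁ M₂) : GridFun M₁ M₂ :=
  fun p => (v (p.1, p.2 + 1) - v (p.1, p.2 - 1)) / (2 * h)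

/-- Second difference in `x`. -/
noncomputable def dxx (h : ℝ) (v : GridFun M₁ M₂) : GridFun M₁ M₂ :=
  fun p => (v (p.1 + 1, p.2) - 2 * v p + v (p.1 - 1, p.2)) / h ^ 2

/-- Second difference in `y`. -/
noncomputable def dyy (h : ℝ) (v : GridFun M₁ M₂) : GridFun M₁ M₂ :=
  fun p => (v (p.1, p.2 + 1) - 2 * v p + v (p.1, p.2 - 1)) / h ^ 2

/-- Combined central difference `δ̂h = δ̂x + δ̂y`. -/
noncomputable def dhath (h : ℝ) (v : GridFun M₁ M₂) : GridFun M₁ M₂ :=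
  fun p => dhx h v p + dhy h v p

/-- Discrete H¹ seminorm. -/
noncomputable def snorm1 [NeZero M₁] [NeZero M₂] (h : ℝ) (v : GridFun M₁ M₂) : ℝ :=
  Real.sqrt (gnorm h (dx h v) ^ 2 + gnorm h (dy h v) ^ 2)

/-- Bilinear operator `ψx(u,v) = (1/3)(u δ̂x v + δ̂x (u v))`. -/
noncomputable def psix (h : ℝ) (u v : GridFun M₁ M₂) : GridFun M₁ M₂ :=
  fun p => (1 / 3 : ℝ) * (u p * dhx h v p + dhx h (fun q => u q * v q) p)

/-- Bilinear operator `ψy(u,v) = (1/3)(u δ̂y v + δ̂y (u v))`. -/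
noncomputable def psiy (h : ℝ) (u v : GridFun M₁ M₂) : GridFun M₁ M₂ :=
  fun p => (1 / 3 : ℝ) * (u p * dhy h v p + dhy h (fun q => u q * v q) p)

/-- Bilinear operator `ψh(u,v) = (1/3)(u δ̂h v + δ̂h (u v))`. -/
noncomputable def psih (h : ℝ) (u v : GridFun M₁ M₂) : GridFun M₁ M₂ :=
  fun p => (1 / 3 : ℝ) * (u p * dhath h v p + dhath h (fun q => u q * v q) p)


section Helpers

variable [NeZero M₁] [NeZero M₂]

lemma gip_eq (h : ℝ) (u v : GridFun M₁ M₂) :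
    gip h u v = h ^ 2 * ∑ p : ZMod M₁ × ZMod M₂, u p * v p := by
  rw [gip, Fintype.sum_prod_type]

lemma gnorm_eq (h : ℝ) (hh : 0 ≤ h) (v : GridFun M₁ M₂) :
    gnorm h v = h * Real.sqrt (∑ p : ZMod M₁ × ZMod M₂, v p ^ 2) := by
  rw [gnorm, gip_eq]
  rw [show ∑ p : ZMod M₁ × ZMod M₂, v p * v p = ∑ p : ZMod M₁ × ZMod M₂, v p ^ 2 by
    simp [sq]]
  rw [Real.sqrt_mul (sq_nonneg h), Real.sqrt_sq hh]

lemma gnorm_nonneg (h : ℝ) (v : GridFun M₁ M₂) : 0 ≤ gnorm h v := Real.sqrt_nonneg _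

lemma snorm1_nonneg (h : ℝ) (v : GridFun M₁ M₂) : 0 ≤ snorm1 h v := Real.sqrt_nonneg _

lemma gip_abs_le (h : ℝ) (hh : 0 ≤ h) (u v : GridFun M₁ M₂) :
    |gip h u v| ≤ gnorm h u * gnorm h v := by
  rw [gip_eq, gnorm_eq h hh, gnorm_eq h hh]
  have h1 : |∑ p : ZMod M₁ × ZMod M₂, u p * v p|
      ≤ Real.sqrt (∑ p : ZMod M₁ × ZMod M₂, u p ^ 2) *
        Real.sqrt (∑ p : ZMod M₁ × ZMod M₂, v p ^ 2) := by
    calc |∑ p : ZMod M₁ × ZMod M₂, u p * v p|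
        ≤ ∑ p : ZMod M₁ × ZMod M₂, |u p * v p| := Finset.abs_sum_le_sum_abs _ _
      _ = ∑ p : ZMod M₁ × ZMod M₂, |u p| * |v p| := by simp [abs_mul]
      _ ≤ Real.sqrt (∑ p : ZMod M₁ × ZMod M₂, |u p| ^ 2) *
          Real.sqrt (∑ p : ZMod M₁ × ZMod M₂, |v p| ^ 2) :=
          Real.sum_mul_le_sqrt_mul_sqrt _ _ _
      _ = _ := by simp [sq_abs]
  calc |h ^ 2 * ∑ p : ZMod M₁ × ZMod M₂, u p * v p|
      = h ^ 2 * |∑ p : ZMod M₁ × ZMod M₂, u p * v p| := by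
        rw [abs_mul, abs_of_nonneg (sq_nonneg h)]
    _ ≤ h ^ 2 * (Real.sqrt (∑ p : ZMod M₁ × ZMod M₂, u p ^ 2) *
          Real.sqrt (∑ p : ZMod M₁ × ZMod M₂, v p ^ 2)) :=
        mul_le_mul_of_nonneg_left h1 (sq_nonneg h)
    _ = (h * Real.sqrt (∑ p : ZMod M₁ × ZMod M₂, u p ^ 2)) *
        (h * Real.sqrt (∑ p : ZMod M₁ × ZMod M₂, v p ^ 2)) := by ring

lemma gnorm_mul_le (h c₀ : ℝ) (hh : 0 ≤ h) (hc : 0 ≤ c₀)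
    (a w : GridFun M₁ M₂) (hb : ∀ p, |w p| ≤ c₀) :
    gnorm h (fun p => a p * w p) ≤ c₀ * gnorm h a := by
  rw [gnorm_eq h hh, gnorm_eq h hh]
  have h1 : Real.sqrt (∑ p : ZMod M₁ × ZMod M₂, (a p * w p) ^ 2)
      ≤ c₀ * Real.sqrt (∑ p : ZMod M₁ × ZMod M₂, a p ^ 2) := by
    rw [show c₀ * Real.sqrt (∑ p : ZMod M₁ × ZMod M₂, a p ^ 2)
        = Real.sqrt (c₀ ^ 2 * ∑ p : ZMod M₁ × ZMod M₂, a p ^ 2) by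
      rw [Real.sqrt_mul (sq_nonneg c₀), Real.sqrt_sq hc]]
    apply Real.sqrt_le_sqrt
    rw [Finset.mul_sum]
    apply Finset.sum_le_sum
    intro p _
    have := hb p
    have h2 : (a p * w p) ^ 2 = a p ^ 2 * w p ^ 2 := by ring
    rw [h2]
    have h3 : w p ^ 2 ≤ c₀ ^ 2 := by
      rw [← sq_abs]
      exact pow_le_pow_left₀ (abs_nonneg _) this 2
    nlinarith [sq_nonneg (a p)]
  calc h * Real.sqrt (∑ p : ZMod M₁ × ZMod M₂, (a p * w p) ^ 2)
      ≤ h * (c₀ * Real.sqrt (∑ p : ZMod M₁ × ZMod M₂, a p ^ 2)) :=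
        mul_le_mul_of_nonneg_left h1 hh
    _ = c₀ * (h * Real.sqrt (∑ p : ZMod M₁ × ZMod M₂, a p ^ 2)) := by ring

lemma sum_shift_x (f : GridFun M₁ M₂) (k : ZMod M₁) :
    ∑ p : ZMod M₁ × ZMod M₂, f (p.1 + k, p.2) = ∑ p : ZMod M₁ × ZMod M₂, f p := by
  exact Fintype.sum_equiv ((Equiv.addRight k).prodCongr (Equiv.refl _)) _ _ (fun p => rfl)

lemma sum_shift_y (f : GridFun M₁ M₂) (k : ZMod M₂) :
    ∑ p : ZMod M₁ × ZMod M₂, f (p.1, p.2 + k) = ∑ p : ZMod M₁ × ZMod M₂, f p := by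
  exact Fintype.sum_equiv ((Equiv.refl _).prodCongr (Equiv.addRight k)) _ _ (fun p => rfl)

end Helpers

section Helpers2

variable [NeZero M₁] [NeZero M₂]

lemma sum_dhath_mul (h : ℝ) (v e : GridFun M₁ M₂) :
    ∑ p : ZMod M₁ × ZMod M₂, dhath h v p * e p
      = - ∑ p : ZMod M₁ × ZMod M₂, v p * dhath h e p := by
  have hA : ∑ p : ZMod M₁ × ZMod M₂, v p * e (p.1 + 1, p.2)
      = ∑ p : ZMod M₁ × ZMod M₂, v (p.1 - 1, p.2) * e p := by
    have := sum_shift_x (fun p => v (p.1 - 1, p.2) * e p) 1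
    simpa [add_sub_cancel_right] using this
  have hB : ∑ p : ZMod M₁ × ZMod M₂, v p * e (p.1 - 1, p.2)
      = ∑ p : ZMod M₁ × ZMod M₂, v (p.1 + 1, p.2) * e p := by
    have := sum_shift_x (fun p => v (p.1 + 1, p.2) * e p) (-1)
    simpa [sub_eq_add_neg, add_assoc] using this
  have hC : ∑ p : ZMod M₁ × ZMod M₂, v p * e (p.1, p.2 + 1)
      = ∑ p : ZMod M₁ × ZMod M₂, v (p.1, p.2 - 1) * e p := by
    have := sum_shift_y (fun p => v (p.1, p.2 - 1) * e p) 1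
    simpa [add_sub_cancel_right] using this
  have hD : ∑ p : ZMod M₁ × ZMod M₂, v p * e (p.1, p.2 - 1)
      = ∑ p : ZMod M₁ × ZMod M₂, v (p.1, p.2 + 1) * e p := by
    have := sum_shift_y (fun p => v (p.1, p.2 + 1) * e p) (-1)
    simpa [sub_eq_add_neg, add_assoc] using this
  have h1 : ∑ p : ZMod M₁ × ZMod M₂, dhath h v p * e p
      = (2 * h)⁻¹ * ((∑ p : ZMod M₁ × ZMod M₂, v (p.1 + 1, p.2) * e p)
        - (∑ p : ZMod M₁ × ZMod M₂, v (p.1 - 1, p.2) * e p)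
        + (∑ p : ZMod M₁ × ZMod M₂, v (p.1, p.2 + 1) * e p)
        - (∑ p : ZMod M₁ × ZMod M₂, v (p.1, p.2 - 1) * e p)) := by
    simp only [dhath, dhx, dhy, ← Finset.sum_sub_distrib, ← Finset.sum_add_distrib,
      Finset.mul_sum]
    apply Finset.sum_congr rfl
    intro p _
    field_simp
    ring
  have h2 : ∑ p : ZMod M₁ × ZMod M₂, v p * dhath h e p
      = (2 * h)⁻¹ * ((∑ p : ZMod M₁ × ZMod M₂, v p * e (p.1 + 1, p.2))
        - (∑ p : ZMod M₁ × ZMod M₂, v p * e (p.1 - 1, p.2))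
        + (∑ p : ZMod M₁ × ZMod M₂, v p * e (p.1, p.2 + 1))
        - (∑ p : ZMod M₁ × ZMod M₂, v p * e (p.1, p.2 - 1))) := by
    simp only [dhath, dhx, dhy, ← Finset.sum_sub_distrib, ← Finset.sum_add_distrib,
      Finset.mul_sum]
    apply Finset.sum_congr rfl
    intro p _
    field_simp
    ring
  rw [h1, h2, hA, hB, hC, hD]
  ring

lemma gip_dhath (h : ℝ) (v e : GridFun M₁ M₂) :
    gip h (dhath h v) e = - gip h v (dhath h e) := by
  rw [gip_eq, gip_eq, sum_dhath_mul]
  ring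

lemma gnorm_dhath_le (h : ℝ) (hh : 0 < h) (e : GridFun M₁ M₂) :
    gnorm h (dhath h e) ≤ Real.sqrt 2 * snorm1 h e := by
  have hx : ∑ p : ZMod M₁ × ZMod M₂, dhx h e p ^ 2
      ≤ ∑ p : ZMod M₁ × ZMod M₂, dx h e p ^ 2 := by
    have hshift : ∑ p : ZMod M₁ × ZMod M₂, dx h e (p.1 - 1, p.2) ^ 2
        = ∑ p : ZMod M₁ × ZMod M₂, dx h e p ^ 2 := by
      have := sum_shift_x (fun p => dx h e (p.1 - 1, p.2) ^ 2) 1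
      simpa [add_sub_cancel_right] using this.symm
    have hpt : ∀ p : ZMod M₁ × ZMod M₂,
        dhx h e p ^ 2 ≤ (dx h e p ^ 2 + dx h e (p.1 - 1, p.2) ^ 2) / 2 := by
      intro p
      have heq : dhx h e p = (dx h e p + dx h e (p.1 - 1, p.2)) / 2 := by
        simp only [dhx, dx, sub_add_cancel]
        rw [← add_div, sub_add_sub_cancel, div_div]
        ring_nf
      rw [heq]
      nlinarith [sq_nonneg (dx h e p - dx h e (p.1 - 1, p.2))]
    calc ∑ p : ZMod M₁ × ZMod M₂, dhx h e p ^ 2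
        ≤ ∑ p : ZMod M₁ × ZMod M₂, (dx h e p ^ 2 + dx h e (p.1 - 1, p.2) ^ 2) / 2 :=
          Finset.sum_le_sum (fun p _ => hpt p)
      _ = ((∑ p : ZMod M₁ × ZMod M₂, dx h e p ^ 2)
          + ∑ p : ZMod M₁ × ZMod M₂, dx h e (p.1 - 1, p.2) ^ 2) / 2 := by
          rw [← Finset.sum_add_distrib, ← Finset.sum_div]
      _ = ∑ p : ZMod M₁ × ZMod M₂, dx h e p ^ 2 := by rw [hshift]; ring
  have hy : ∑ p : ZMod M₁ × ZMod M₂, dhy h e p ^ 2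
      ≤ ∑ p : ZMod M₁ × ZMod M₂, dy h e p ^ 2 := by
    have hshift : ∑ p : ZMod M₁ × ZMod M₂, dy h e (p.1, p.2 - 1) ^ 2
        = ∑ p : ZMod M₁ × ZMod M₂, dy h e p ^ 2 := by
      have := sum_shift_y (fun p => dy h e (p.1, p.2 - 1) ^ 2) 1
      simpa [add_sub_cancel_right] using this.symm
    have hpt : ∀ p : ZMod M₁ × ZMod M₂,
        dhy h e p ^ 2 ≤ (dy h e p ^ 2 + dy h e (p.1, p.2 - 1) ^ 2) / 2 := by
      intro p
      have heq : dhy h e p = (dy h e p + dy h e (p.1, p.2 - 1)) / 2 := by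
        simp only [dhy, dy, sub_add_cancel]
        rw [← add_div, sub_add_sub_cancel, div_div]
        ring_nf
      rw [heq]
      nlinarith [sq_nonneg (dy h e p - dy h e (p.1, p.2 - 1))]
    calc ∑ p : ZMod M₁ × ZMod M₂, dhy h e p ^ 2
        ≤ ∑ p : ZMod M₁ × ZMod M₂, (dy h e p ^ 2 + dy h e (p.1, p.2 - 1) ^ 2) / 2 :=
          Finset.sum_le_sum (fun p _ => hpt p)
      _ = ((∑ p : ZMod M₁ × ZMod M₂, dy h e p ^ 2)
          + ∑ p : ZMod M₁ × ZMod M₂, dy h e (p.1, p.2 - 1) ^ 2) / 2 := by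
          rw [← Finset.sum_add_distrib, ← Finset.sum_div]
      _ = ∑ p : ZMod M₁ × ZMod M₂, dy h e p ^ 2 := by rw [hshift]; ring
  have hsum : ∑ p : ZMod M₁ × ZMod M₂, dhath h e p ^ 2
      ≤ 2 * ((∑ p : ZMod M₁ × ZMod M₂, dx h e p ^ 2)
        + ∑ p : ZMod M₁ × ZMod M₂, dy h e p ^ 2) := by
    have hpt : ∀ p : ZMod M₁ × ZMod M₂,
        dhath h e p ^ 2 ≤ 2 * (dhx h e p ^ 2 + dhy h e p ^ 2) := by
      intro p
      simp only [dhath]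
      nlinarith [sq_nonneg (dhx h e p - dhy h e p)]
    calc ∑ p : ZMod M₁ × ZMod M₂, dhath h e p ^ 2
        ≤ ∑ p : ZMod M₁ × ZMod M₂, 2 * (dhx h e p ^ 2 + dhy h e p ^ 2) :=
          Finset.sum_le_sum (fun p _ => hpt p)
      _ = 2 * ((∑ p : ZMod M₁ × ZMod M₂, dhx h e p ^ 2)
          + ∑ p : ZMod M₁ × ZMod M₂, dhy h e p ^ 2) := by
          rw [← Finset.mul_sum, Finset.sum_add_distrib]
      _ ≤ _ := by nlinarith [hx, hy]
  -- now convert to norms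
  have hA2 : gnorm h (dhath h e) ^ 2 = h ^ 2 * ∑ p : ZMod M₁ × ZMod M₂, dhath h e p ^ 2 := by
    rw [gnorm_eq h hh.le, mul_pow, Real.sq_sqrt (Finset.sum_nonneg fun p _ => sq_nonneg _)]
  have hB2 : snorm1 h e ^ 2 = h ^ 2 * ((∑ p : ZMod M₁ × ZMod M₂, dx h e p ^ 2)
      + ∑ p : ZMod M₁ × ZMod M₂, dy h e p ^ 2) := by
    rw [snorm1, Real.sq_sqrt (by positivity), gnorm_eq h hh.le, gnorm_eq h hh.le,
      mul_pow, mul_pow, Real.sq_sqrt (Finset.sum_nonneg fun p _ => sq_nonneg _),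
      Real.sq_sqrt (Finset.sum_nonneg fun p _ => sq_nonneg _)]
    ring
  have hle : gnorm h (dhath h e) ^ 2 ≤ 2 * snorm1 h e ^ 2 := by
    rw [hA2, hB2]
    nlinarith [sq_nonneg h]
  have h0 : (0:ℝ) ≤ gnorm h (dhath h e) := gnorm_nonneg h _
  have h1 : (0:ℝ) ≤ snorm1 h e := snorm1_nonneg h e
  calc gnorm h (dhath h e) = Real.sqrt (gnorm h (dhath h e) ^ 2) := (Real.sqrt_sq h0).symm
    _ ≤ Real.sqrt (2 * snorm1 h e ^ 2) := Real.sqrt_le_sqrt hle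
    _ = Real.sqrt 2 * snorm1 h e := by
        rw [Real.sqrt_mul (by norm_num), Real.sqrt_sq h1]

end Helpers2

/-- Bilinear estimate for `ψh` against a uniformly bounded grid function. -/
theorem psih_bilinear_estimate [NeZero M₁] [NeZero M₂]
    (h c₀ : ℝ) (hh : 0 < h) (hc : 0 ≤ c₀)
    (U a e : GridFun M₁ M₂)
    (hU : ∀ p, |U p| ≤ c₀) (hdU : ∀ p, |dhath h U p| ≤ c₀) :
    |gip h (psih h a U) e| ≤
      c₀ / 3 * gnorm h a * gnorm h e + Real.sqrt 2 * c₀ / 3 * gnorm h a * snorm1 h e := by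
  have hsplit : gip h (psih h a U) e
      = 1 / 3 * gip h (fun p => a p * dhath h U p) e
        + 1 / 3 * gip h (dhath h (fun q => a q * U q)) e := by
    rw [gip_eq, gip_eq, gip_eq]
    have hpt : ∀ p : ZMod M₁ × ZMod M₂, psih h a U p * e p
        = 1 / 3 * (a p * dhath h U p * e p)
          + 1 / 3 * (dhath h (fun q => a q * U q) p * e p) := by
      intro p; simp only [psih]; ring
    rw [Finset.sum_congr rfl (fun p _ => hpt p), Finset.sum_add_distrib,
      ← Finset.mul_sum, ← Finset.mul_sum]
    ring
  have t1 : |gip h (fun p => a p * dhath h U p) e| ≤ c₀ * gnorm h a * gnorm h e := by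
    calc |gip h (fun p => a p * dhath h U p) e|
        ≤ gnorm h (fun p => a p * dhath h U p) * gnorm h e := gip_abs_le h hh.le _ _
      _ ≤ (c₀ * gnorm h a) * gnorm h e :=
          mul_le_mul_of_nonneg_right
            (gnorm_mul_le h c₀ hh.le hc a _ hdU) (gnorm_nonneg h e)
      _ = c₀ * gnorm h a * gnorm h e := by ring
  have t2 : |gip h (dhath h (fun q => a q * U q)) e|
      ≤ c₀ * gnorm h a * (Real.sqrt 2 * snorm1 h e) := by
    rw [gip_dhath, abs_neg]
    calc |gip h (fun q => a q * U q) (dhath h e)|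
        ≤ gnorm h (fun q => a q * U q) * gnorm h (dhath h e) := gip_abs_le h hh.le _ _
      _ ≤ (c₀ * gnorm h a) * (Real.sqrt 2 * snorm1 h e) :=
          mul_le_mul (gnorm_mul_le h c₀ hh.le hc a U hU) (gnorm_dhath_le h hh e)
            (gnorm_nonneg h _) (mul_nonneg hc (gnorm_nonneg h a))
      _ = c₀ * gnorm h a * (Real.sqrt 2 * snorm1 h e) := by ring
  rw [hsplit]
  calc |1 / 3 * gip h (fun p => a p * dhath h U p) e
        + 1 / 3 * gip h (dhath h (fun q => a q * U q)) e|
      ≤ |1 / 3 * gip h (fun p => a p * dhath h U p) e|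
        + |1 / 3 * gip h (dhath h (fun q => a q * U q)) e| := abs_add_le _ _
    _ = 1 / 3 * |gip h (fun p => a p * dhath h U p) e|
        + 1 / 3 * |gip h (dhath h (fun q => a q * U q)) e| := by
        rw [abs_mul, abs_mul, show |(1:ℝ)/3| = 1/3 from abs_of_pos (by norm_num)]
    _ ≤ 1 / 3 * (c₀ * gnorm h a * gnorm h e)
        + 1 / 3 * (c₀ * gnorm h a * (Real.sqrt 2 * snorm1 h e)) := by linarith
    _ = c₀ / 3 * gnorm h a * gnorm h e
        + Real.sqrt 2 * c₀ / 3 * gnorm h a * snorm1 h e := by ring
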